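/- arXiv:2309.12640 — 6 statements merged into one kernel-verified Lean document; each statement's English description precedes it below -/
import Mathlib

section
/- Arbitrage-free interval (Lemma, Ferreira–Parkes setting): let x* > 0 and consider the state (x*, F_y(x*)). (i) If x* ∈ [L_x, R_x], then the total profit of a miner from executing any finite sequence of its own transactions starting at this state is at most 0. (ii) If x* < L_x, then the single transaction Sell(X, (L_x − x*)/(1−f)) has strictly positive miner profit and its profit is at least the total profit of any finite sequence of miner transactions started at this state; symmetrically, if x* > R_x, the single transaction Sell(Y, (F_y(R_x) − F_y(x*))/(1−f)) is optimal and has strictly positive profit. -/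
/-!
Value the reserves `(x, F_y x)` at the fee-adjusted prices `(px / (1 - f), py)`, giving `V_L`, and
`(px, py / (1 - f))`, giving `V_R`. A `Sell(X)` moving the reserve from `x` to `x'` earns exactly
`V_L x - V_L x'`; a `Sell(Y)` earns at most `V_R x - V_R x'`, and at most `px (x - x')`. As the
rate `-F_y'` decreases, `V_L` is minimal at `L_x` and `V_R` at `R_x`. The potential `φ`, equal to
`V_L - V_L L_x` left of `L_x`, to `0` on `[L_x, R_x]` and to `V_R - V_R R_x` right of `R_x`, is the
profit of the best single transaction, and every transaction from `x` to `x'` earns at most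
`φ x - φ x'`: on each of the three pieces this is a sign condition on the rate. Summing, a
sequence started at `x*` earns at most `φ x*`, which vanishes on `[L_x, R_x]`.
-/

/-- A transaction in the two-token CFMM: sell `q` units of token X or of token Y. -/
inductive Tx where
  | sellX (q : ℝ)
  | sellY (q : ℝ)

namespace Tx

/-- The amount of tokens sold by a transaction. -/
def amount : Tx → ℝ
  | sellX q => q
  | sellY q => q

end Tx

/-- Executing a transaction at the state `(x, Fy x)` with fee fraction `f`:
the new `X`-reserve (the new `Y`-reserve is `Fy` of it). -/
noncomputable def step (Fy Fx : ℝ → ℝ) (f : ℝ) (x : ℝ) : Tx → ℝ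
  | Tx.sellX q => x + (1 - f) * q
  | Tx.sellY q => Fx (Fy x + (1 - f) * q)

/-- Profit that a miner gains by executing one transaction at state `(x, Fy x)`. -/
noncomputable def txProfit (Fy Fx : ℝ → ℝ) (f px py : ℝ) (x : ℝ) : Tx → ℝ
  | Tx.sellX q => (Fy x - Fy (x + (1 - f) * q)) * py - q * px
  | Tx.sellY q => (x - Fx (Fy x + (1 - f) * q)) * px - q * py

/-- Total profit from executing a finite sequence of transactions starting at `X`-reserve `x`. -/
noncomputable def totalProfit (Fy Fx : ℝ → ℝ) (f px py : ℝ) : ℝ → List Tx → ℝ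
  | _, [] => 0
  | x, t :: rest =>
      txProfit Fy Fx f px py x t + totalProfit Fy Fx f px py (step Fy Fx f x t) rest

/-- All intermediate `X`-reserves (including initial and final) along an execution. -/
noncomputable def statesList (Fy Fx : ℝ → ℝ) (f : ℝ) : ℝ → List Tx → List ℝ
  | x, [] => [x]
  | x, t :: rest => x :: statesList Fy Fx f (step Fy Fx f x t) rest

open Set

structure IsReserveCurve (F : ℝ → ℝ) : Prop where
  differentiableAt : ∀ x ∈ Ioi (0 : ℝ), DifferentiableAt ℝ F x
  strictAntiOn : StrictAntiOn F (Ioi 0)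
  strictAntiOn_rate : StrictAntiOn (fun x => -deriv F x) (Ioi 0)

/-- The value of the reserves `(x, F x)` at prices `p` for `X` and `q` for `Y`. -/
def reserveValue (F : ℝ → ℝ) (p q x : ℝ) : ℝ := p * x + q * F x

theorem reserveValue_sub (F : ℝ → ℝ) (p q p' q' x : ℝ) :
    reserveValue F p q x - reserveValue F p' q' x = reserveValue F (p - p') (q - q') x := by
  unfold reserveValue
  ring

theorem antitoneOn_Ioi_of_Ioc_Icc_Ici {g : ℝ → ℝ} {c a b : ℝ} (hca : c < a) (hab : a ≤ b)
    (h₁ : AntitoneOn g (Ioc c a)) (h₂ : AntitoneOn g (Icc a b)) (h₃ : AntitoneOn g (Ici b)) :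
    AntitoneOn g (Ioi c) := by
  have h₁₂ := h₁.union_right h₂ (isGreatest_Ioc hca) (isLeast_Icc hab)
  rw [Ioc_union_Icc_eq_Ioc hca hab] at h₁₂
  rw [← Ioc_union_Ici_eq_Ioi (hca.trans_le hab)]
  exact h₁₂.union_right h₃ (isGreatest_Ioc (hca.trans_le hab)) isLeast_Ici

section ReserveValue

variable {F : ℝ → ℝ} {s : Set ℝ}

theorem continuousOn_reserveValue (hF : ContinuousOn F s) (p q : ℝ) :
    ContinuousOn (reserveValue F p q) s :=
  (continuousOn_const.mul continuousOn_id).add (continuousOn_const.mul hF)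

theorem deriv_reserveValue {x : ℝ} (hF : DifferentiableAt ℝ F x) (p q : ℝ) :
    deriv (reserveValue F p q) x = p + q * deriv F x := by
  have : HasDerivAt (reserveValue F p q) (p * 1 + q * deriv F x) x :=
    ((hasDerivAt_id x).const_mul p).add (hF.hasDerivAt.const_mul q)
  simpa using this.deriv

theorem antitoneOn_reserveValue (hF : AntitoneOn F s) {p q : ℝ} (hp : p ≤ 0) (hq : 0 ≤ q) :
    AntitoneOn (reserveValue F p q) s := by
  intro a ha b hb hab
  have := hF ha hb hab
  unfold reserveValue
  nlinarith

/-- `G` inverts `F` only on the image of `F`; above it, `G` is arbitrary. -/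
theorem apply_le_of_invOn (hF : ContinuousOn F (Ioi 0)) {G : ℝ → ℝ}
    (hG : InvOn G F (Ioi 0) (F '' Ioi 0)) {x y : ℝ} (hx : 0 < x) (hxy : F x ≤ y)
    (hy : 0 < G y) :
    F (G y) ≤ y := by
  by_cases hmem : y ∈ F '' Ioi 0
  · exact (hG.2 hmem).le
  by_contra! hlt
  exact hmem (((isPreconnected_Ioi.image F hF).ordConnected).out
    ⟨x, hx, rfl⟩ ⟨G y, hy, rfl⟩ ⟨hxy, hlt.le⟩)

end ReserveValue

namespace IsReserveCurve

variable {F : ℝ → ℝ}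

theorem continuousOn (hF : IsReserveCurve F) : ContinuousOn F (Ioi 0) :=
  fun x hx => (hF.differentiableAt x hx).continuousAt.continuousWithinAt

theorem strictAntiOn_reserveValue (hF : IsReserveCurve F) {p q x₀ : ℝ} (hq : 0 < q)
    (hx₀ : q * -deriv F x₀ = p) : StrictAntiOn (reserveValue F p q) (Ioc 0 x₀) := by
  refine strictAntiOn_of_deriv_neg (convex_Ioc 0 x₀)
    ((continuousOn_reserveValue hF.continuousOn p q).mono Ioc_subset_Ioi_self) fun x hx => ?_
  rw [interior_Ioc] at hx
  have hrate : -deriv F x₀ < -deriv F x := hF.strictAntiOn_rate hx.1 (hx.1.trans hx.2) hx.2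
  rw [deriv_reserveValue (hF.differentiableAt x hx.1) p q, ← hx₀]
  nlinarith

theorem strictMonoOn_reserveValue (hF : IsReserveCurve F) {p q x₀ : ℝ} (hq : 0 < q)
    (hx₀pos : 0 < x₀) (hx₀ : q * -deriv F x₀ = p) :
    StrictMonoOn (reserveValue F p q) (Ici x₀) := by
  refine strictMonoOn_of_deriv_pos (convex_Ici x₀)
    ((continuousOn_reserveValue hF.continuousOn p q).mono fun x hx => hx₀pos.trans_le hx)
    fun x hx => ?_
  rw [interior_Ici] at hx
  have hrate : -deriv F x < -deriv F x₀ := hF.strictAntiOn_rate hx₀pos (hx₀pos.trans hx) hx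
  rw [deriv_reserveValue (hF.differentiableAt x (hx₀pos.trans hx)) p q, ← hx₀]
  nlinarith

end IsReserveCurve

/-- A `Sell(X)` pays `px / (1 - f)` for each unit of `X` that reaches the pool. -/
noncomputable abbrev sellXValue (Fy : ℝ → ℝ) (f px py : ℝ) : ℝ → ℝ :=
  reserveValue Fy (px / (1 - f)) py

/-- A `Sell(Y)` pays `py / (1 - f)` for each unit of `Y` that reaches the pool. -/
noncomputable abbrev sellYValue (Fy : ℝ → ℝ) (f px py : ℝ) : ℝ → ℝ :=
  reserveValue Fy px (py / (1 - f))

section Profit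

variable {Fy Fx : ℝ → ℝ} {f px py x q : ℝ}

theorem txProfit_sellX (hf : f < 1) :
    txProfit Fy Fx f px py x (.sellX q) = sellXValue Fy f px py x -
      sellXValue Fy f px py (step Fy Fx f x (.sellX q)) := by
  have : 1 - f ≠ 0 := by linarith
  simp only [txProfit, step, reserveValue]
  field_simp
  ring

theorem txProfit_sellY_le (hf : f < 1) (hpy : 0 ≤ py)
    (hy : Fy (step Fy Fx f x (.sellY q)) ≤ Fy x + (1 - f) * q) :
    txProfit Fy Fx f px py x (.sellY q) ≤ sellYValue Fy f px py x -
      sellYValue Fy f px py (step Fy Fx f x (.sellY q)) := by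
  have h1f : 0 < 1 - f := by linarith
  simp only [step] at hy
  simp only [txProfit, step, reserveValue]
  have : py / (1 - f) * (Fy (Fx (Fy x + (1 - f) * q)) - Fy x) ≤ q * py := by
    rw [div_mul_eq_mul_div, div_le_iff₀ h1f]
    nlinarith
  linarith

theorem mem_statesList_self (l : List Tx) : x ∈ statesList Fy Fx f x l := by
  cases l <;> simp [statesList]

theorem totalProfit_le_of_potential {Φ : ℝ → ℝ} (hΦ : ∀ x, 0 < x → 0 ≤ Φ x)
    (hstep : ∀ x t, 0 < x → 0 ≤ t.amount → 0 < step Fy Fx f x t →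
      txProfit Fy Fx f px py x t ≤ Φ x - Φ (step Fy Fx f x t))
    (txs : List Tx) (hamt : ∀ t ∈ txs, 0 ≤ t.amount)
    (hpos : ∀ s ∈ statesList Fy Fx f x txs, 0 < s) :
    totalProfit Fy Fx f px py x txs ≤ Φ x := by
  induction txs generalizing x with
  | nil => exact hΦ x (hpos x (mem_statesList_self []))
  | cons t rest ih =>
    have htail : ∀ s ∈ statesList Fy Fx f (step Fy Fx f x t) rest, 0 < s :=
      fun s hs => hpos s (List.mem_cons_of_mem _ hs)
    have hrest := ih (fun t' ht' => hamt t' (List.mem_cons_of_mem t ht')) htail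
    have ht := hstep x t (hpos x List.mem_cons_self) (hamt t List.mem_cons_self)
      (htail _ (mem_statesList_self rest))
    simp only [totalProfit]
    linarith

end Profit

structure IsArbitrageFreeInterval (Fy : ℝ → ℝ) (f px py Lx Rx : ℝ) : Prop where
  fee_nonneg : 0 ≤ f
  fee_lt_one : f < 1
  px_pos : 0 < px
  py_pos : 0 < py
  curve : IsReserveCurve Fy
  left_pos : 0 < Lx
  rate_left : -deriv Fy Lx = (1 / (1 - f)) * (px / py)
  right_pos : 0 < Rx
  rate_right : -deriv Fy Rx = (1 - f) * (px / py)

/-- The profit of the best single transaction at the state `(x, Fy x)`. -/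
noncomputable def arbitragePotential (Fy : ℝ → ℝ) (f px py Lx Rx x : ℝ) : ℝ :=
  (sellXValue Fy f px py (min x Lx) - sellXValue Fy f px py Lx) +
    (sellYValue Fy f px py (max x Rx) - sellYValue Fy f px py Rx)

theorem arbitragePotential_of_mem_Icc {Fy : ℝ → ℝ} {f px py Lx Rx x : ℝ}
    (hx : x ∈ Icc Lx Rx) :
    arbitragePotential Fy f px py Lx Rx x = 0 := by
  simp [arbitragePotential, hx.1, hx.2]

namespace IsArbitrageFreeInterval

variable {Fy Fx : ℝ → ℝ} {f px py Lx Rx : ℝ}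

theorem one_sub_fee_pos (h : IsArbitrageFreeInterval Fy f px py Lx Rx) : 0 < 1 - f := by
  linarith [h.fee_lt_one]

theorem left_le_right (h : IsArbitrageFreeInterval Fy f px py Lx Rx) : Lx ≤ Rx := by
  rw [← h.curve.strictAntiOn_rate.le_iff_ge h.right_pos h.left_pos, h.rate_left, h.rate_right]
  have h1f := h.one_sub_fee_pos
  have hc : 0 ≤ px / py := (div_pos h.px_pos h.py_pos).le
  calc (1 - f) * (px / py) ≤ 1 * (px / py) := by gcongr; linarith [h.fee_nonneg]
    _ ≤ 1 / (1 - f) * (px / py) := by gcongr; rw [le_div_iff₀ h1f]; linarith [h.fee_nonneg]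

theorem strictAntiOn_sellXValue (h : IsArbitrageFreeInterval Fy f px py Lx Rx) :
    StrictAntiOn (sellXValue Fy f px py) (Ioc 0 Lx) := by
  refine h.curve.strictAntiOn_reserveValue h.py_pos ?_
  rw [h.rate_left]
  field_simp [h.py_pos.ne']

theorem strictMonoOn_sellXValue (h : IsArbitrageFreeInterval Fy f px py Lx Rx) :
    StrictMonoOn (sellXValue Fy f px py) (Ici Lx) := by
  refine h.curve.strictMonoOn_reserveValue h.py_pos h.left_pos ?_
  rw [h.rate_left]
  field_simp [h.py_pos.ne']

theorem strictAntiOn_sellYValue (h : IsArbitrageFreeInterval Fy f px py Lx Rx) :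
    StrictAntiOn (sellYValue Fy f px py) (Ioc 0 Rx) := by
  refine h.curve.strictAntiOn_reserveValue (div_pos h.py_pos h.one_sub_fee_pos) ?_
  rw [h.rate_right]
  field_simp [h.py_pos.ne', h.one_sub_fee_pos.ne']

theorem strictMonoOn_sellYValue (h : IsArbitrageFreeInterval Fy f px py Lx Rx) :
    StrictMonoOn (sellYValue Fy f px py) (Ici Rx) := by
  refine h.curve.strictMonoOn_reserveValue (div_pos h.py_pos h.one_sub_fee_pos) h.right_pos ?_
  rw [h.rate_right]
  field_simp [h.py_pos.ne', h.one_sub_fee_pos.ne']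

theorem antitoneOn_sellYValue_sub_sellXValue (h : IsArbitrageFreeInterval Fy f px py Lx Rx) :
    AntitoneOn (fun x => sellYValue Fy f px py x -
      sellXValue Fy f px py x) (Ioi 0) := by
  have h1f := h.one_sub_fee_pos
  have hf1 : 1 - f ≤ 1 := by linarith [h.fee_nonneg]
  simp only [reserveValue_sub]
  exact antitoneOn_reserveValue h.curve.strictAntiOn.antitoneOn
    (sub_nonpos.2 (le_div_self h.px_pos.le h1f hf1))
    (sub_nonneg.2 (le_div_self h.py_pos.le h1f hf1))

theorem arbitragePotential_of_le_left (h : IsArbitrageFreeInterval Fy f px py Lx Rx) {x : ℝ}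
    (hx : x ≤ Lx) : arbitragePotential Fy f px py Lx Rx x =
      sellXValue Fy f px py x - sellXValue Fy f px py Lx := by
  simp [arbitragePotential, hx, hx.trans h.left_le_right]

theorem arbitragePotential_of_right_le (h : IsArbitrageFreeInterval Fy f px py Lx Rx) {x : ℝ}
    (hx : Rx ≤ x) : arbitragePotential Fy f px py Lx Rx x =
      sellYValue Fy f px py x - sellYValue Fy f px py Rx := by
  simp [arbitragePotential, hx, h.left_le_right.trans hx]

theorem arbitragePotential_nonneg (h : IsArbitrageFreeInterval Fy f px py Lx Rx) {x : ℝ}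
    (hx : 0 < x) : 0 ≤ arbitragePotential Fy f px py Lx Rx x := by
  have hL := h.strictAntiOn_sellXValue.antitoneOn ⟨lt_min hx h.left_pos, min_le_right x Lx⟩
    ⟨h.left_pos, le_rfl⟩ (min_le_right x Lx)
  have hR := h.strictMonoOn_sellYValue.monotoneOn (mem_Ici.2 le_rfl)
    (mem_Ici.2 (le_max_right x Rx)) (le_max_right x Rx)
  unfold arbitragePotential
  linarith

theorem antitoneOn_arbitragePotential_sub_sellXValue
    (h : IsArbitrageFreeInterval Fy f px py Lx Rx) :
    AntitoneOn (fun x => arbitragePotential Fy f px py Lx Rx x -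
      sellXValue Fy f px py x) (Ioi 0) := by
  refine antitoneOn_Ioi_of_Ioc_Icc_Ici h.left_pos h.left_le_right ?_ ?_ ?_
  · intro a ha b hb _
    simp only [h.arbitragePotential_of_le_left ha.2, h.arbitragePotential_of_le_left hb.2]
    linarith
  · intro a ha b hb hab
    simp only [arbitragePotential_of_mem_Icc ha, arbitragePotential_of_mem_Icc hb]
    linarith [h.strictMonoOn_sellXValue.monotoneOn ha.1 hb.1 hab]
  · intro a ha b hb hab
    simp only [h.arbitragePotential_of_right_le ha, h.arbitragePotential_of_right_le hb]
    linarith [h.antitoneOn_sellYValue_sub_sellXValue (h.right_pos.trans_le ha)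
      (h.right_pos.trans_le hb) hab]

theorem antitoneOn_sellYValue_sub_arbitragePotential
    (h : IsArbitrageFreeInterval Fy f px py Lx Rx) :
    AntitoneOn (fun x => sellYValue Fy f px py x -
      arbitragePotential Fy f px py Lx Rx x) (Ioi 0) := by
  refine antitoneOn_Ioi_of_Ioc_Icc_Ici h.left_pos h.left_le_right ?_ ?_ ?_
  · intro a ha b hb hab
    simp only [h.arbitragePotential_of_le_left ha.2, h.arbitragePotential_of_le_left hb.2]
    linarith [h.antitoneOn_sellYValue_sub_sellXValue ha.1 hb.1 hab]
  · intro a ha b hb hab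
    simp only [arbitragePotential_of_mem_Icc ha, arbitragePotential_of_mem_Icc hb]
    linarith [h.strictAntiOn_sellYValue.antitoneOn ⟨h.left_pos.trans_le ha.1, ha.2⟩
      ⟨h.left_pos.trans_le hb.1, hb.2⟩ hab]
  · intro a ha b hb _
    simp only [h.arbitragePotential_of_right_le ha, h.arbitragePotential_of_right_le hb]
    linarith

theorem antitoneOn_arbitragePotential_sub_mul (h : IsArbitrageFreeInterval Fy f px py Lx Rx) :
    AntitoneOn (fun x => arbitragePotential Fy f px py Lx Rx x - px * x) (Ioi 0) := by
  refine antitoneOn_Ioi_of_Ioc_Icc_Ici h.left_pos h.left_le_right ?_ ?_ ?_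
  · intro a ha b hb hab
    simp only [h.arbitragePotential_of_le_left ha.2, h.arbitragePotential_of_le_left hb.2]
    linarith [h.strictAntiOn_sellXValue.antitoneOn ha hb hab,
      mul_le_mul_of_nonneg_left hab h.px_pos.le]
  · intro a ha b hb hab
    simp only [arbitragePotential_of_mem_Icc ha, arbitragePotential_of_mem_Icc hb]
    linarith [mul_le_mul_of_nonneg_left hab h.px_pos.le]
  · intro a ha b hb hab
    simp only [h.arbitragePotential_of_right_le ha, h.arbitragePotential_of_right_le hb,
      reserveValue]
    have hFy := h.curve.strictAntiOn.antitoneOn (h.right_pos.trans_le ha)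
      (h.right_pos.trans_le hb) hab
    linarith [mul_le_mul_of_nonneg_left hFy (div_pos h.py_pos h.one_sub_fee_pos).le]

theorem txProfit_le_arbitragePotential_sub (h : IsArbitrageFreeInterval Fy f px py Lx Rx)
    (hFx : InvOn Fx Fy (Ioi 0) (Fy '' Ioi 0)) {x : ℝ} {t : Tx} (hx : 0 < x) (ht : 0 ≤ t.amount)
    (hx' : 0 < step Fy Fx f x t) :
    txProfit Fy Fx f px py x t ≤ arbitragePotential Fy f px py Lx Rx x -
      arbitragePotential Fy f px py Lx Rx (step Fy Fx f x t) := by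
  have h1f := h.one_sub_fee_pos
  cases t with
  | sellX q =>
    have hxx' : x ≤ x + (1 - f) * q := le_add_of_nonneg_right (mul_nonneg h1f.le ht)
    rw [txProfit_sellX h.fee_lt_one]
    linarith [h.antitoneOn_arbitragePotential_sub_sellXValue hx hx' hxx']
  | sellY q =>
    have hq : 0 ≤ q := ht
    rcases le_total (step Fy Fx f x (.sellY q)) x with hle | hle
    · have hy := apply_le_of_invOn h.curve.continuousOn hFx hx
        (le_add_of_nonneg_right (mul_nonneg h1f.le hq)) hx'
      linarith [txProfit_sellY_le (px := px) h.fee_lt_one h.py_pos.le hy,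
        h.antitoneOn_sellYValue_sub_arbitragePotential hx' hx hle]
    · have hprofit :
          txProfit Fy Fx f px py x (.sellY q) ≤ px * (x - step Fy Fx f x (.sellY q)) := by
        simp only [txProfit, step]
        nlinarith [mul_nonneg hq h.py_pos.le]
      linarith [h.antitoneOn_arbitragePotential_sub_mul hx hx' hle]

theorem totalProfit_le_arbitragePotential (h : IsArbitrageFreeInterval Fy f px py Lx Rx)
    (hFx : InvOn Fx Fy (Ioi 0) (Fy '' Ioi 0)) {x : ℝ} (txs : List Tx)
    (hamt : ∀ t ∈ txs, 0 ≤ t.amount) (hpos : ∀ s ∈ statesList Fy Fx f x txs, 0 < s) :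
    totalProfit Fy Fx f px py x txs ≤ arbitragePotential Fy f px py Lx Rx x :=
  totalProfit_le_of_potential (fun _ => h.arbitragePotential_nonneg)
    (fun _ _ => h.txProfit_le_arbitragePotential_sub hFx) txs hamt hpos

theorem txProfit_sellX_eq_arbitragePotential (h : IsArbitrageFreeInterval Fy f px py Lx Rx)
    {x : ℝ} (hx : x ≤ Lx) : txProfit Fy Fx f px py x (.sellX ((Lx - x) / (1 - f))) =
      arbitragePotential Fy f px py Lx Rx x := by
  have hstep : step Fy Fx f x (.sellX ((Lx - x) / (1 - f))) = Lx := by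
    simp only [step]
    field_simp [h.one_sub_fee_pos.ne']
    ring
  rw [txProfit_sellX h.fee_lt_one, hstep, h.arbitragePotential_of_le_left hx]

theorem txProfit_sellY_eq_arbitragePotential (h : IsArbitrageFreeInterval Fy f px py Lx Rx)
    (hFx : InvOn Fx Fy (Ioi 0) (Fy '' Ioi 0)) {x : ℝ} (hx : Rx ≤ x) :
    txProfit Fy Fx f px py x (.sellY ((Fy Rx - Fy x) / (1 - f))) =
      arbitragePotential Fy f px py Lx Rx x := by
  have h1f := h.one_sub_fee_pos.ne'
  have hy : Fy x + (1 - f) * ((Fy Rx - Fy x) / (1 - f)) = Fy Rx := by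
    field_simp
    ring
  rw [h.arbitragePotential_of_right_le hx]
  simp only [txProfit, hy, hFx.1 (mem_Ioi.2 h.right_pos), reserveValue]
  field_simp
  ring

theorem arbitragePotential_pos_of_lt_left (h : IsArbitrageFreeInterval Fy f px py Lx Rx)
    {x : ℝ} (hx : 0 < x) (hxL : x < Lx) : 0 < arbitragePotential Fy f px py Lx Rx x := by
  rw [h.arbitragePotential_of_le_left hxL.le, sub_pos]
  exact h.strictAntiOn_sellXValue ⟨hx, hxL.le⟩ ⟨h.left_pos, le_rfl⟩ hxL

theorem arbitragePotential_pos_of_right_lt (h : IsArbitrageFreeInterval Fy f px py Lx Rx)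
    {x : ℝ} (hRx : Rx < x) : 0 < arbitragePotential Fy f px py Lx Rx x := by
  rw [h.arbitragePotential_of_right_le hRx.le, sub_pos]
  exact h.strictMonoOn_sellYValue (mem_Ici.2 le_rfl) (mem_Ici.2 hRx.le) hRx

end IsArbitrageFreeInterval

theorem arbitrage_free_interval_general
    (Fy Fx : ℝ → ℝ) (f px py Lx Rx xstar : ℝ)
    (hf0 : 0 ≤ f) (hf1 : f < 1)
    (hpx : 0 < px) (hpy : 0 < py)
    (hFy_diff : ∀ x ∈ Set.Ioi (0 : ℝ), DifferentiableAt ℝ Fy x)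
    (hFy_anti : StrictAntiOn Fy (Set.Ioi 0))
    (hr_anti : StrictAntiOn (fun x => -deriv Fy x) (Set.Ioi 0))
    (hFx_inv : Set.InvOn Fx Fy (Set.Ioi 0) (Fy '' Set.Ioi 0))
    (hLx_pos : 0 < Lx) (hLx : -deriv Fy Lx = (1 / (1 - f)) * (px / py))
    (hRx_pos : 0 < Rx) (hRx : -deriv Fy Rx = (1 - f) * (px / py))
    (hxstar_pos : 0 < xstar) :
    -- (i) no profitable strategy inside the arbitrage-free interval
    (xstar ∈ Set.Icc Lx Rx →
      ∀ txs : List Tx, (∀ t ∈ txs, 0 ≤ t.amount) →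
        (∀ s ∈ statesList Fy Fx f xstar txs, 0 < s) →
        totalProfit Fy Fx f px py xstar txs ≤ 0) ∧
    -- (ii) left of the interval: one `Sell(X, (L_x − x*)/(1−f))` is optimal and profitable
    (xstar < Lx →
      0 < txProfit Fy Fx f px py xstar (Tx.sellX ((Lx - xstar) / (1 - f))) ∧
      ∀ txs : List Tx, (∀ t ∈ txs, 0 ≤ t.amount) →
        (∀ s ∈ statesList Fy Fx f xstar txs, 0 < s) →
        totalProfit Fy Fx f px py xstar txs ≤
          txProfit Fy Fx f px py xstar (Tx.sellX ((Lx - xstar) / (1 - f)))) ∧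
    -- (ii') right of the interval: one `Sell(Y, (F_y(R_x) − F_y(x*))/(1−f))` is optimal
    (Rx < xstar →
      0 < txProfit Fy Fx f px py xstar (Tx.sellY ((Fy Rx - Fy xstar) / (1 - f))) ∧
      ∀ txs : List Tx, (∀ t ∈ txs, 0 ≤ t.amount) →
        (∀ s ∈ statesList Fy Fx f xstar txs, 0 < s) →
        totalProfit Fy Fx f px py xstar txs ≤
          txProfit Fy Fx f px py xstar (Tx.sellY ((Fy Rx - Fy xstar) / (1 - f)))) := by
  have h : IsArbitrageFreeInterval Fy f px py Lx Rx :=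
    ⟨hf0, hf1, hpx, hpy, ⟨hFy_diff, hFy_anti, hr_anti⟩, hLx_pos, hLx, hRx_pos, hRx⟩
  have hbound := h.totalProfit_le_arbitragePotential hFx_inv (x := xstar)
  refine ⟨fun hmem => ?_, fun hlt => ?_, fun hgt => ?_⟩
  · simpa only [arbitragePotential_of_mem_Icc hmem] using hbound
  · rw [h.txProfit_sellX_eq_arbitragePotential hlt.le]
    exact ⟨h.arbitragePotential_pos_of_lt_left hxstar_pos hlt, hbound⟩
  · rw [h.txProfit_sellY_eq_arbitragePotential hFx_inv hgt.le]
    exact ⟨h.arbitragePotential_pos_of_right_lt hgt, hbound⟩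

/-- **arbitrage-free interval.**
Let `x* > 0` and consider the state `(x*, F_y(x*))`.
(i) If `x* ∈ [L_x, R_x]`, then the total profit of a miner from executing any finite
sequence of its own transactions starting at this state is at most `0`.
(ii) If `x* < L_x`, then the single transaction `Sell(X, (L_x − x*)/(1−f))` has strictly
positive miner profit, and its profit is at least the total profit of any finite sequence of
miner transactions started at this state; symmetrically, if `x* > R_x`, the single
transaction `Sell(Y, (F_y(R_x) − F_y(x*))/(1−f))` is optimal and has strictly positive
profit. (Sequences have nonnegative sale amounts and keep reserves positive.) -/
theorem arbitrage_free_interval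
    (Fy Fx : ℝ → ℝ) (f px py Lx Rx xstar : ℝ)
    (hf0 : 0 ≤ f) (hf1 : f < 1)
    (hpx : 0 < px) (hpy : 0 < py)
    (hFy_diff : ∀ x ∈ Set.Ioi (0 : ℝ), DifferentiableAt ℝ Fy x)
    (hFy_anti : StrictAntiOn Fy (Set.Ioi 0))
    (hr_pos : ∀ x ∈ Set.Ioi (0 : ℝ), 0 < -deriv Fy x)
    (hr_anti : StrictAntiOn (fun x => -deriv Fy x) (Set.Ioi 0))
    (hFx_inv : Set.InvOn Fx Fy (Set.Ioi 0) (Fy '' Set.Ioi 0))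
    (hLx_pos : 0 < Lx) (hLx : -deriv Fy Lx = (1 / (1 - f)) * (px / py))
    (hRx_pos : 0 < Rx) (hRx : -deriv Fy Rx = (1 - f) * (px / py))
    (hxstar_pos : 0 < xstar) :
    -- (i) no profitable strategy inside the arbitrage-free interval
    (xstar ∈ Set.Icc Lx Rx →
      ∀ txs : List Tx, (∀ t ∈ txs, 0 ≤ t.amount) →
        (∀ s ∈ statesList Fy Fx f xstar txs, 0 < s) →
        totalProfit Fy Fx f px py xstar txs ≤ 0) ∧
    -- (ii) left of the interval: one `Sell(X, (L_x − x*)/(1−f))` is optimal and profitable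
    (xstar < Lx →
      0 < txProfit Fy Fx f px py xstar (Tx.sellX ((Lx - xstar) / (1 - f))) ∧
      ∀ txs : List Tx, (∀ t ∈ txs, 0 ≤ t.amount) →
        (∀ s ∈ statesList Fy Fx f xstar txs, 0 < s) →
        totalProfit Fy Fx f px py xstar txs ≤
          txProfit Fy Fx f px py xstar (Tx.sellX ((Lx - xstar) / (1 - f)))) ∧
    -- (ii') right of the interval: one `Sell(Y, (F_y(R_x) − F_y(x*))/(1−f))` is optimal
    (Rx < xstar →
      0 < txProfit Fy Fx f px py xstar (Tx.sellY ((Fy Rx - Fy xstar) / (1 - f))) ∧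
      ∀ txs : List Tx, (∀ t ∈ txs, 0 ≤ t.amount) →
        (∀ s ∈ statesList Fy Fx f xstar txs, 0 < s) →
        totalProfit Fy Fx f px py xstar txs ≤
          txProfit Fy Fx f px py xstar (Tx.sellY ((Fy Rx - Fy xstar) / (1 - f)))) :=
  arbitrage_free_interval_general Fy Fx f px py Lx Rx xstar hf0 hf1 hpx hpy hFy_diff hFy_anti
    hr_anti hFx_inv hLx_pos hLx hRx_pos hRx hxstar_pos
end

section
/- If x* ≥ L_x, then for every q ≥ 0 the miner's profit from executing Sell(X,q) at state (x*, F_y(x*)) is nonpositive: (F_y(x*) − F_y(x*+(1−f)q))·p_y − q·p_x ≤ 0. -/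
/-! Beyond `L_x` the marginal rate is at most `r(L_x) = p_x / ((1 - f) p_y)`, so by the mean value
theorem the `(1 - f) q` units of X that reach the pool buy at most `q p_x / p_y` units of Y. -/

open Set

theorem sub_le_neg_deriv_mul_sub_of_antitoneOn {F : ℝ → ℝ} {L x y : ℝ}
    (hF : DifferentiableOn ℝ F (Ici L)) (hr : AntitoneOn (fun t => -deriv F t) (Ici L))
    (hx : L ≤ x) (hxy : x ≤ y) : F x - F y ≤ -deriv F L * (y - x) := by
  have hslope : ∀ t ∈ interior (Ici L), deriv F L ≤ deriv F t := by
    intro t ht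
    rw [interior_Ici] at ht
    exact neg_le_neg_iff.1 (hr self_mem_Ici (mem_Ici.2 ht.le) ht.le)
  have := (convex_Ici L).mul_sub_le_image_sub_of_le_deriv hF.continuousOn
    (hF.mono interior_subset) hslope x hx y (hx.trans hxy) hxy
  linarith

theorem sellX_profit_nonpos_of_ge_Lx_general
    (Fy : ℝ → ℝ) (f px py Lx xstar q : ℝ)
    (hf1 : f < 1)
    (hpy : 0 < py)
    (hFy_diff : ∀ x ∈ Set.Ioi (0 : ℝ), DifferentiableAt ℝ Fy x)
    (hr_anti : StrictAntiOn (fun x => -deriv Fy x) (Set.Ioi 0))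
    (hLx_pos : 0 < Lx)
    (hLx : -deriv Fy Lx = (1 / (1 - f)) * (px / py))
    (hxstar : Lx ≤ xstar)
    (hq : 0 ≤ q) :
    (Fy xstar - Fy (xstar + (1 - f) * q)) * py - q * px ≤ 0 := by
  have hfee : 0 < 1 - f := sub_pos.2 hf1
  have hdrop := sub_le_neg_deriv_mul_sub_of_antitoneOn
    (fun t ht => (hFy_diff t (hLx_pos.trans_le ht)).differentiableWithinAt)
    (hr_anti.antitoneOn.mono (Ici_subset_Ioi.2 hLx_pos)) hxstar
    (le_add_of_nonneg_right (mul_nonneg hfee.le hq))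
  have hpayout : 1 / (1 - f) * (px / py) * (xstar + (1 - f) * q - xstar) = q * px / py := by
    field_simp
    ring
  rw [hLx, hpayout, le_div_iff₀ hpy] at hdrop
  linarith

/-- If `x* ≥ L_x`, then for every `q ≥ 0` the miner's profit from executing `Sell(X,q)` at state
`(x*, F_y(x*))` is nonpositive: `(F_y(x*) − F_y(x*+(1−f)q))·p_y − q·p_x ≤ 0`.

The CFMM is given by a differentiable, strictly decreasing reserve curve `Fy` on `(0,∞)`,
with marginal exchange rate `r x = −Fy′ x` positive and strictly decreasing there;
`p_x, p_y > 0` are the exogenous prices, `f ∈ [0,1)` the fee fraction, and `L_x` the unique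
point with `r L_x = (1/(1−f))·(p_x/p_y)`. -/
theorem sellX_profit_nonpos_of_ge_Lx
    (Fy : ℝ → ℝ) (f px py Lx xstar q : ℝ)
    (hf0 : 0 ≤ f) (hf1 : f < 1)
    (hpx : 0 < px) (hpy : 0 < py)
    (hFy_diff : ∀ x ∈ Set.Ioi (0 : ℝ), DifferentiableAt ℝ Fy x)
    (hFy_anti : StrictAntiOn Fy (Set.Ioi 0))
    (hr_pos : ∀ x ∈ Set.Ioi (0 : ℝ), 0 < -deriv Fy x)
    (hr_anti : StrictAntiOn (fun x => -deriv Fy x) (Set.Ioi 0))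
    (hLx_pos : 0 < Lx)
    (hLx : -deriv Fy Lx = (1 / (1 - f)) * (px / py))
    (hxstar : Lx ≤ xstar)
    (hq : 0 ≤ q) :
    (Fy xstar - Fy (xstar + (1 - f) * q)) * py - q * px ≤ 0 :=
  sellX_profit_nonpos_of_ge_Lx_general Fy f px py Lx xstar q hf1 hpy hFy_diff hr_anti hLx_pos hLx
    hxstar hq
end

section
/- If x* ≤ R_x, then for every q ≥ 0 the miner's profit from executing Sell(Y,q) at state (x*, F_y(x*)) is nonpositive: with y* = F_y(x*), (x* − F_x(y* + (1−f)q))·p_x − q·p_y ≤ 0. -/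
/-- If `x* ≤ R_x`, then for every `q ≥ 0` the miner's profit from executing `Sell(Y,q)` at state
`(x*, F_y(x*))` is nonpositive: with `y* = F_y(x*)`,
`(x* − F_x(y* + (1−f)q))·p_x − q·p_y ≤ 0`.

The CFMM is given by a differentiable, strictly decreasing reserve curve `Fy` on `(0,∞)`,
with marginal exchange rate `r x = −Fy′ x` positive and strictly decreasing there, and
`Fx` the inverse function of `Fy`; `p_x, p_y > 0` are the exogenous prices, `f ∈ [0,1)` the
fee fraction, and `R_x` the unique point with `r R_x = (1−f)·(p_x/p_y)`. -/
theorem sellY_profit_nonpos_of_le_Rx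
    (Fy Fx : ℝ → ℝ) (f px py Rx xstar q : ℝ)
    (hf0 : 0 ≤ f) (hf1 : f < 1)
    (hpx : 0 < px) (hpy : 0 < py)
    (hFy_diff : ∀ x ∈ Set.Ioi (0 : ℝ), DifferentiableAt ℝ Fy x)
    (hFy_anti : StrictAntiOn Fy (Set.Ioi 0))
    (hr_pos : ∀ x ∈ Set.Ioi (0 : ℝ), 0 < -deriv Fy x)
    (hr_anti : StrictAntiOn (fun x => -deriv Fy x) (Set.Ioi 0))
    (hFx_inv : Set.InvOn Fx Fy (Set.Ioi 0) (Fy '' Set.Ioi 0))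
    (hFx_pos : ∀ y, Fy xstar ≤ y → 0 < Fx y)
    (hRx_pos : 0 < Rx)
    (hRx : -deriv Fy Rx = (1 - f) * (px / py))
    (hxstar_pos : 0 < xstar)
    (hxstar : xstar ≤ Rx)
    (hq : 0 ≤ q) :
    (xstar - Fx (Fy xstar + (1 - f) * q)) * px - q * py ≤ 0 := by
  have hf : 0 < 1 - f := by linarith
  set y1 := Fy xstar + (1 - f) * q with hy1
  have hy1ge : Fy xstar ≤ y1 := by nlinarith
  have hx1pos : 0 < Fx y1 := hFx_pos _ hy1ge
  -- Key MVT estimate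
  have key : ∀ a, 0 < a → a < xstar →
      (1 - f) * px * (xstar - a) ≤ (Fy a - Fy xstar) * py := by
    intro a ha hax
    have hcont : ContinuousOn Fy (Set.Icc a xstar) := fun x hx =>
      ((hFy_diff x (lt_of_lt_of_le ha hx.1)).continuousAt).continuousWithinAt
    obtain ⟨c, hc, hslope⟩ := exists_deriv_eq_slope Fy hax hcont
      (fun x hx => (hFy_diff x (lt_trans ha hx.1)).differentiableWithinAt)
    have hc0 : (0:ℝ) < c := lt_trans ha hc.1
    have hcRx : c < Rx := lt_of_lt_of_le hc.2 hxstar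
    have hrc : (1 - f) * (px / py) < -deriv Fy c := by
      have h : -deriv Fy Rx < -deriv Fy c :=
        hr_anti (Set.mem_Ioi.mpr hc0) (Set.mem_Ioi.mpr hRx_pos) hcRx
      rw [hRx] at h; exact h
    have hderiv : -deriv Fy c = (Fy a - Fy xstar) / (xstar - a) := by
      rw [hslope]; ring
    have hpos : 0 < xstar - a := by linarith
    rw [hderiv] at hrc
    have step : (1 - f) * (px / py) * (xstar - a) < Fy a - Fy xstar :=
      (lt_div_iff₀ hpos).mp hrc
    have e1 : px / py * py = px := div_mul_cancel₀ _ hpy.ne'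
    calc (1 - f) * px * (xstar - a) = (1 - f) * (px / py) * (xstar - a) * py := by
          field_simp
      _ ≤ (Fy a - Fy xstar) * py := by nlinarith [mul_le_mul_of_nonneg_right step.le hpy.le]
  by_cases hmem : y1 ∈ Fy '' Set.Ioi 0
  · -- y1 is on the curve
    set x1 := Fx y1 with hx1
    have hFyx1 : Fy x1 = y1 := hFx_inv.2 hmem
    by_cases hcase : xstar ≤ x1
    · nlinarith
    · push_neg at hcase
      have hkey := key x1 hx1pos hcase
      have hdiff : Fy x1 - Fy xstar = (1 - f) * q := by rw [hFyx1, hy1]; ring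
      rw [hdiff] at hkey
      have h4 : (1 - f) * (px * (xstar - x1)) ≤ (1 - f) * (q * py) := by ring_nf at hkey ⊢; linarith
      have h3 : px * (xstar - x1) ≤ q * py := le_of_mul_le_mul_left h4 hf
      nlinarith
  · -- y1 above the curve's range: Fy ε < y1 for all small ε
    have hbelow : ∀ ε, 0 < ε → ε < xstar → Fy ε < y1 := by
      intro ε hε hεx
      by_contra hge
      push_neg at hge
      have hcont : ContinuousOn Fy (Set.Icc ε xstar) := fun x hx =>
        ((hFy_diff x (lt_of_lt_of_le hε hx.1)).continuousAt).continuousWithinAt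
      have : y1 ∈ Fy '' Set.Icc ε xstar :=
        intermediate_value_Icc' (le_of_lt hεx) hcont ⟨hy1ge, hge⟩
      obtain ⟨z, hz, hzeq⟩ := this
      exact hmem ⟨z, lt_of_lt_of_le hε hz.1, hzeq⟩
    have hmain : px * xstar ≤ q * py := by
      refine le_of_forall_pos_le_add ?_
      intro δ hδ
      set ε := min (δ / px) (xstar / 2) with hε
      have hε0 : 0 < ε := lt_min (div_pos hδ hpx) (by linarith)
      have hεx : ε < xstar := lt_of_le_of_lt (min_le_right _ _) (by linarith)
      have h1 := key ε hε0 hεx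
      have h2 : Fy ε - Fy xstar < (1 - f) * q := by
        have := hbelow ε hε0 hεx; rw [hy1] at this; linarith
      have h3 : (1 - f) * px * (xstar - ε) < (1 - f) * q * py := by nlinarith
      have h4 : (1 - f) * (px * (xstar - ε)) ≤ (1 - f) * (q * py) := by ring_nf at h3 ⊢; linarith
      have h5 : px * (xstar - ε) ≤ q * py := le_of_mul_le_mul_left h4 hf
      have h6 : px * ε ≤ δ := by
        have hle : ε ≤ δ / px := min_le_left _ _
        calc px * ε ≤ px * (δ / px) := by nlinarith
          _ = δ := by field_simp
      linarith
    nlinarith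
end

section
/- Optimal single arbitrage amount: if x* < L_x, then for every q ≥ 0 the miner's profit U(q) := (F_y(x*) − F_y(x*+(1−f)q))·p_y − q·p_x from executing Sell(X,q) at state (x*, F_y(x*)) satisfies U(q) ≤ U((L_x − x*)/(1−f)), and moreover U((L_x − x*)/(1−f)) > 0. -/
/-!
Read the profit `U(q)` as a function of the traded amount. Its derivative is
`(1 - f) · p_y · (r(x* + (1 - f) q) - r(L_x))`, because `(1 - f) · p_y · r(L_x) = p_x`.
Since `r` is strictly decreasing, this is positive while the new state `x* + (1 - f) q` lies below
`L_x` and negative beyond, so `U` strictly increases up to `q* = (L_x - x*)/(1 - f)` and strictly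
decreases after it. Hence `q*` maximises `U` on `[0, ∞)`, and `U(q*) > U(0) = 0`.
-/

open Set

/-- The profit `U(q)` of a miner executing `Sell(X, q)` at state `(x, Fy x)`. -/
def sellXProfit (Fy : ℝ → ℝ) (f px py x q : ℝ) : ℝ :=
  (Fy x - Fy (x + (1 - f) * q)) * py - q * px

namespace sellXProfit

variable {Fy : ℝ → ℝ} {f px py x Lx : ℝ}

@[simp]
theorem apply_zero : sellXProfit Fy f px py x 0 = 0 := by
  simp [sellXProfit]

theorem hasDerivAt {q : ℝ} (hFy : DifferentiableAt ℝ Fy (x + (1 - f) * q)) :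
    HasDerivAt (sellXProfit Fy f px py x) ((1 - f) * -deriv Fy (x + (1 - f) * q) * py - px) q := by
  have hstate : HasDerivAt (fun q => x + (1 - f) * q) (1 - f) q := by
    simpa using ((hasDerivAt_id q).const_mul (1 - f)).const_add x
  exact ((((hFy.hasDerivAt.comp q hstate).const_sub (Fy x)).mul_const py).sub
    ((hasDerivAt_id q).mul_const px)).congr_deriv (by ring)

variable (hFy_diff : ∀ t ∈ Ioi (0 : ℝ), DifferentiableAt ℝ Fy t) (hf1 : f < 1) (hx : 0 < x)

include hf1 hx in
theorem state_pos {q : ℝ} (hq : 0 ≤ q) : 0 < x + (1 - f) * q :=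
  add_pos_of_pos_of_nonneg hx (mul_nonneg (sub_nonneg.2 hf1.le) hq)

include hFy_diff hf1 hx

theorem continuousOn : ContinuousOn (sellXProfit Fy f px py x) (Ici 0) := fun _ hq =>
  (hasDerivAt (hFy_diff _ (state_pos hf1 hx hq.out))).continuousAt.continuousWithinAt

theorem deriv_eq (hpy : 0 < py) (hLx : -deriv Fy Lx = (1 / (1 - f)) * (px / py)) {q : ℝ}
    (hq : 0 ≤ q) :
    deriv (sellXProfit Fy f px py x) q =
      (1 - f) * py * (-deriv Fy (x + (1 - f) * q) - -deriv Fy Lx) := by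
  rw [(hasDerivAt (hFy_diff _ (state_pos hf1 hx hq))).deriv, hLx]
  field_simp [(sub_pos.2 hf1).ne', hpy.ne']

variable (hpy : 0 < py) (hr_anti : StrictAntiOn (fun t => -deriv Fy t) (Ioi 0))
  (hLx : -deriv Fy Lx = (1 / (1 - f)) * (px / py))
include hpy hr_anti hLx

theorem strictMonoOn : StrictMonoOn (sellXProfit Fy f px py x) (Icc 0 ((Lx - x) / (1 - f))) := by
  refine strictMonoOn_of_deriv_pos (convex_Icc _ _)
    ((continuousOn hFy_diff hf1 hx).mono Icc_subset_Ici_self) fun q hq => ?_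
  rw [interior_Icc] at hq
  have hstate := state_pos hf1 hx hq.1.le
  have hstate_lt : x + (1 - f) * q < Lx := by
    have := (lt_div_iff₀' (sub_pos.2 hf1)).1 hq.2
    linarith
  rw [deriv_eq hFy_diff hf1 hx hpy hLx hq.1.le]
  have := hr_anti hstate (hstate.trans hstate_lt) hstate_lt
  exact mul_pos (mul_pos (sub_pos.2 hf1) hpy) (sub_pos.2 this)

theorem strictAntiOn (hxL : x ≤ Lx) :
    StrictAntiOn (sellXProfit Fy f px py x) (Ici ((Lx - x) / (1 - f))) := by
  have hq₀ : 0 ≤ (Lx - x) / (1 - f) := div_nonneg (sub_nonneg.2 hxL) (sub_pos.2 hf1).le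
  refine strictAntiOn_of_deriv_neg (convex_Ici _)
    ((continuousOn hFy_diff hf1 hx).mono (Ici_subset_Ici.2 hq₀)) fun q hq => ?_
  rw [interior_Ici] at hq
  have hq_nonneg : 0 ≤ q := hq₀.trans hq.out.le
  have hstate_gt : Lx < x + (1 - f) * q := by
    have := (div_lt_iff₀' (sub_pos.2 hf1)).1 hq.out
    linarith
  rw [deriv_eq hFy_diff hf1 hx hpy hLx hq_nonneg]
  have := hr_anti (hx.trans_le hxL) (state_pos hf1 hx hq_nonneg) hstate_gt
  exact mul_neg_of_pos_of_neg (mul_pos (sub_pos.2 hf1) hpy) (sub_neg.2 this)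

end sellXProfit

theorem sellX_optimal_amount_of_lt_Lx_general
    (Fy : ℝ → ℝ) (f px py Lx xstar : ℝ)
    (hf1 : f < 1)
    (hpy : 0 < py)
    (hFy_diff : ∀ x ∈ Set.Ioi (0 : ℝ), DifferentiableAt ℝ Fy x)
    (hr_anti : StrictAntiOn (fun x => -deriv Fy x) (Set.Ioi 0))
    (hLx : -deriv Fy Lx = (1 / (1 - f)) * (px / py))
    (hxstar_pos : 0 < xstar)
    (hxstar : xstar < Lx) :
    (∀ q : ℝ, 0 ≤ q →
        (Fy xstar - Fy (xstar + (1 - f) * q)) * py - q * px ≤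
          (Fy xstar - Fy (xstar + (1 - f) * ((Lx - xstar) / (1 - f)))) * py -
            ((Lx - xstar) / (1 - f)) * px) ∧
      0 < (Fy xstar - Fy (xstar + (1 - f) * ((Lx - xstar) / (1 - f)))) * py -
            ((Lx - xstar) / (1 - f)) * px := by
  set qstar := (Lx - xstar) / (1 - f)
  have hqstar : 0 < qstar := div_pos (sub_pos.2 hxstar) (sub_pos.2 hf1)
  have hmono := sellXProfit.strictMonoOn hFy_diff hf1 hxstar_pos hpy hr_anti hLx
  have hanti := sellXProfit.strictAntiOn hFy_diff hf1 hxstar_pos hpy hr_anti hLx hxstar.le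
  refine ⟨fun q hq => ?_, ?_⟩
  · change sellXProfit Fy f px py xstar q ≤ sellXProfit Fy f px py xstar qstar
    rcases le_total q qstar with hle | hge
    · exact hmono.monotoneOn ⟨hq, hle⟩ ⟨hqstar.le, le_rfl⟩ hle
    · exact hanti.antitoneOn self_mem_Ici hge hge
  · change 0 < sellXProfit Fy f px py xstar qstar
    simpa using hmono ⟨le_rfl, hqstar.le⟩ ⟨hqstar.le, le_rfl⟩ hqstar

/-- **optimal single arbitrage amount.**
If `x* < L_x`, then for every `q ≥ 0` the miner's profit
`U(q) := (F_y(x*) − F_y(x*+(1−f)q))·p_y − q·p_x` from executing `Sell(X,q)` at state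
`(x*, F_y(x*))` satisfies `U(q) ≤ U((L_x − x*)/(1−f))`, and moreover
`U((L_x − x*)/(1−f)) > 0`.

The CFMM is given by a differentiable, strictly decreasing reserve curve `Fy` on `(0,∞)`,
with marginal exchange rate `r x = −Fy′ x` positive and strictly decreasing there;
`p_x, p_y > 0` are the exogenous prices, `f ∈ [0,1)` the fee fraction, and `L_x` the unique
point with `r L_x = (1/(1−f))·(p_x/p_y)`. -/
theorem sellX_optimal_amount_of_lt_Lx
    (Fy : ℝ → ℝ) (f px py Lx xstar : ℝ)
    (hf0 : 0 ≤ f) (hf1 : f < 1)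
    (hpx : 0 < px) (hpy : 0 < py)
    (hFy_diff : ∀ x ∈ Set.Ioi (0 : ℝ), DifferentiableAt ℝ Fy x)
    (hFy_anti : StrictAntiOn Fy (Set.Ioi 0))
    (hr_pos : ∀ x ∈ Set.Ioi (0 : ℝ), 0 < -deriv Fy x)
    (hr_anti : StrictAntiOn (fun x => -deriv Fy x) (Set.Ioi 0))
    (hLx_pos : 0 < Lx)
    (hLx : -deriv Fy Lx = (1 / (1 - f)) * (px / py))
    (hxstar_pos : 0 < xstar)
    (hxstar : xstar < Lx) :
    (∀ q : ℝ, 0 ≤ q →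
        (Fy xstar - Fy (xstar + (1 - f) * q)) * py - q * px ≤
          (Fy xstar - Fy (xstar + (1 - f) * ((Lx - xstar) / (1 - f)))) * py -
            ((Lx - xstar) / (1 - f)) * px) ∧
      0 < (Fy xstar - Fy (xstar + (1 - f) * ((Lx - xstar) / (1 - f)))) * py -
            ((Lx - xstar) / (1 - f)) * px :=
  sellX_optimal_amount_of_lt_Lx_general Fy f px py Lx xstar hf1 hpy hFy_diff hr_anti hLx hxstar_pos
    hxstar
end

section
/- For every x′ > 0 it holds that (F_y(L_x) − F_y(x′))·p_y − ((x′ − L_x)/(1−f))·p_x ≤ 0; that is, the function g(x′) = (F_y(L_x) − F_y(x′))·p_y − ((x′ − L_x)/(1−f))·p_x attains its maximum value 0 at x′ = L_x. -/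
/-- For every `x′ > 0` it holds that
`(F_y(L_x) − F_y(x′))·p_y − ((x′ − L_x)/(1−f))·p_x ≤ 0`; that is, the function
`g(x′) = (F_y(L_x) − F_y(x′))·p_y − ((x′ − L_x)/(1−f))·p_x` attains its maximum
value `0` at `x′ = L_x`.

The CFMM is given by a differentiable, strictly decreasing reserve curve `Fy` on `(0,∞)`,
with marginal exchange rate `r x = −Fy′ x` positive and strictly decreasing there;
`p_x, p_y > 0` are the exogenous prices, `f ∈ [0,1)` the fee fraction, and `L_x` the unique
point with `r L_x = (1/(1−f))·(p_x/p_y)`. -/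
theorem g_nonpos
    (Fy : ℝ → ℝ) (f px py Lx : ℝ)
    (hf0 : 0 ≤ f) (hf1 : f < 1)
    (hpx : 0 < px) (hpy : 0 < py)
    (hFy_diff : ∀ x ∈ Set.Ioi (0 : ℝ), DifferentiableAt ℝ Fy x)
    (hFy_anti : StrictAntiOn Fy (Set.Ioi 0))
    (hr_pos : ∀ x ∈ Set.Ioi (0 : ℝ), 0 < -deriv Fy x)
    (hr_anti : StrictAntiOn (fun x => -deriv Fy x) (Set.Ioi 0))
    (hLx_pos : 0 < Lx)
    (hLx : -deriv Fy Lx = (1 / (1 - f)) * (px / py)) :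
    (∀ x' : ℝ, 0 < x' →
        (Fy Lx - Fy x') * py - ((x' - Lx) / (1 - f)) * px ≤ 0) ∧
      (Fy Lx - Fy Lx) * py - ((Lx - Lx) / (1 - f)) * px = 0 := by
  have hf : (0:ℝ) < 1 - f := by linarith
  constructor
  · intro x' hx'
    -- key tangent inequality
    have key : Fy Lx - Fy x' ≤ (x' - Lx) * (-deriv Fy Lx) := by
      rcases lt_trichotomy x' Lx with h | h | h
      · -- x' < Lx
        obtain ⟨c, hc, hderiv⟩ := exists_deriv_eq_slope Fy h
          (fun x hx => (hFy_diff x (lt_of_lt_of_le hx' hx.1)).continuousAt.continuousWithinAt)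
          (fun x hx => (hFy_diff x (lt_trans hx' hx.1)).differentiableWithinAt)
        have hc0 : (0:ℝ) < c := lt_trans hx' hc.1
        have hlt : -deriv Fy Lx < -deriv Fy c := hr_anti hc0 hLx_pos hc.2
        have : Fy Lx - Fy x' = (-deriv Fy c) * (x' - Lx) := by
          have hne : Lx - x' ≠ 0 := by linarith
          field_simp at hderiv
          nlinarith [hderiv]
        rw [this]
        nlinarith
      · simp [h]
      · -- Lx < x'
        obtain ⟨c, hc, hderiv⟩ := exists_deriv_eq_slope Fy h
          (fun x hx => (hFy_diff x (lt_of_lt_of_le hLx_pos hx.1)).continuousAt.continuousWithinAt)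
          (fun x hx => (hFy_diff x (lt_trans hLx_pos hx.1)).differentiableWithinAt)
        have hc0 : (0:ℝ) < c := lt_trans hLx_pos hc.1
        have hlt : -deriv Fy c < -deriv Fy Lx := hr_anti hLx_pos hc0 hc.1
        have : Fy Lx - Fy x' = (-deriv Fy c) * (x' - Lx) := by
          have hne : x' - Lx ≠ 0 := by linarith
          field_simp at hderiv
          nlinarith [hderiv]
        rw [this]
        nlinarith
    have h2 : (x' - Lx) * (-deriv Fy Lx) * py = ((x' - Lx) / (1 - f)) * px := by
      rw [hLx]; field_simp
    nlinarith [mul_le_mul_of_nonneg_right key hpy.le]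
  · ring
end

section
/- Potential step inequality for user transactions: assume r(x0) = p_x/p_y. If a transaction Sell(X,q) (q ≥ 0) is executed at a state (x̄, F_y(x̄)) with x̄ ≤ x0, producing the new reserve x̂ = x̄ + (1−f)q, then φ(x̂) − φ(x̄) ≤ AP(s0, Sell(X,q)), where s0 = (x0, F_y(x0)). -/
/-!
Away from the no-arbitrage band `[L_x, R_x]` each branch of `φ` has the form
`x ↦ a (x - c) + b (F_y x - F_y c)` with `r c = a / b`; its derivative `a - b r(x)` changes sign
only at `c` because `r` is decreasing. Hence `φ ≥ 0`, `φ` is antitone on `(0, R_x]`, and the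
right branch is monotone on `[R_x, ∞)`, where it evaluates to `AP` at `x′`. If `x̂ ≤ R_x` the
step decreases `φ` while `AP ≥ 0`; otherwise `R_x < x̂ ≤ x′` because `x̄ ≤ x0`, so
`φ(x̂) ≤ AP ≤ AP + φ(x̄)`.
-/

/-- The potential function `φ`:
`φ(x) = (x − R_x)·p_x + ((F_y(x) − F_y(R_x))/(1−f))·p_y` if `x > R_x`;
`φ(x) = ((x − L_x)/(1−f))·p_x + (F_y(x) − F_y(L_x))·p_y` if `x < L_x`;
`φ(x) = 0` if `x ∈ [L_x, R_x]`. -/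
noncomputable def phi (Fy : ℝ → ℝ) (f px py Lx Rx : ℝ) (x : ℝ) : ℝ :=
  if Rx < x then (x - Rx) * px + ((Fy x - Fy Rx) / (1 - f)) * py
  else if x < Lx then ((x - Lx) / (1 - f)) * px + (Fy x - Fy Lx) * py
  else 0

open Set

section ValueAlongCurve

variable {F : ℝ → ℝ} {a b c : ℝ}

theorem hasDerivAt_mul_sub_add_mul_sub {x : ℝ} (hF : DifferentiableAt ℝ F x) :
    HasDerivAt (fun y => a * (y - c) + b * (F y - F c)) (a + b * deriv F x) x := by
  have := (((hasDerivAt_id x).sub_const c).const_mul a).add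
    ((hF.hasDerivAt.sub_const (F c)).const_mul b)
  rwa [mul_one] at this

variable (hb : 0 < b) (hF : ∀ x ∈ Ioi (0 : ℝ), DifferentiableAt ℝ F x)
  (hr : AntitoneOn (fun x => -deriv F x) (Ioi 0)) (hc : 0 < c) (hrc : -deriv F c = a / b)
include hb hF hr hc hrc

theorem monotoneOn_Ici_of_neg_deriv_eq_div :
    MonotoneOn (fun x => a * (x - c) + b * (F x - F c)) (Ici c) := by
  have hD : ∀ x ∈ Ici c, HasDerivAt (fun y => a * (y - c) + b * (F y - F c))
      (a + b * deriv F x) x := fun x hx =>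
    hasDerivAt_mul_sub_add_mul_sub (hF x (hc.trans_le hx))
  refine monotoneOn_of_deriv_nonneg (convex_Ici c)
    (fun x hx => (hD x hx).continuousAt.continuousWithinAt)
    (fun x hx => (hD x (interior_subset hx)).differentiableAt.differentiableWithinAt)
    (fun x hx => ?_)
  have hx : c ≤ x := interior_subset hx
  have hrx : -deriv F x ≤ a / b := hrc ▸ hr hc (hc.trans_le hx) hx
  rw [(hD x hx).deriv]
  have := mul_le_mul_of_nonneg_left hrx hb.le
  rw [mul_div_cancel₀ a hb.ne'] at this
  linarith

theorem antitoneOn_Ioc_of_neg_deriv_eq_div :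
    AntitoneOn (fun x => a * (x - c) + b * (F x - F c)) (Ioc 0 c) := by
  have hD : ∀ x ∈ Ioc 0 c, HasDerivAt (fun y => a * (y - c) + b * (F y - F c))
      (a + b * deriv F x) x := fun x hx =>
    hasDerivAt_mul_sub_add_mul_sub (hF x hx.1)
  refine antitoneOn_of_deriv_nonpos (convex_Ioc 0 c)
    (fun x hx => (hD x hx).continuousAt.continuousWithinAt)
    (fun x hx => (hD x (interior_subset hx)).differentiableAt.differentiableWithinAt)
    (fun x hx => ?_)
  have hx : x ∈ Ioc 0 c := interior_subset hx
  have hrx : a / b ≤ -deriv F x := hrc ▸ hr hx.1 hc hx.2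
  rw [(hD x hx).deriv]
  have := mul_le_mul_of_nonneg_left hrx hb.le
  rw [mul_div_cancel₀ a hb.ne'] at this
  linarith

end ValueAlongCurve

section Potential

variable {Fy : ℝ → ℝ} {f px py Lx Rx : ℝ}

/-- `AP(s0, Sell(X,q))` is the value of this branch of `φ` at `x′`. -/
noncomputable def phiRight (Fy : ℝ → ℝ) (f px py Rx x : ℝ) : ℝ :=
  px * (x - Rx) + py / (1 - f) * (Fy x - Fy Rx)

noncomputable def phiLeft (Fy : ℝ → ℝ) (f px py Lx x : ℝ) : ℝ :=
  px / (1 - f) * (x - Lx) + py * (Fy x - Fy Lx)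

theorem phi_eq_phiRight {x : ℝ} (hx : Rx < x) :
    phi Fy f px py Lx Rx x = phiRight Fy f px py Rx x := by
  rw [phi, if_pos hx, phiRight]
  ring

theorem phi_eq_phiLeft_min {x : ℝ} (hx : x ≤ Rx) :
    phi Fy f px py Lx Rx x = phiLeft Fy f px py Lx (min x Lx) := by
  rw [phi, if_neg hx.not_gt]
  split_ifs with hxL
  · rw [min_eq_left hxL.le, phiLeft]
    ring
  · simp [min_eq_right (not_lt.1 hxL), phiLeft]

variable (hpy : 0 < py) (hFy_diff : ∀ x ∈ Ioi (0 : ℝ), DifferentiableAt ℝ Fy x)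
  (hr_anti : AntitoneOn (fun x => -deriv Fy x) (Ioi 0))
include hpy hFy_diff hr_anti

theorem monotoneOn_phiRight (hf1 : f < 1) (hRx_pos : 0 < Rx)
    (hRx : -deriv Fy Rx = (1 - f) * (px / py)) :
    MonotoneOn (phiRight Fy f px py Rx) (Ici Rx) :=
  monotoneOn_Ici_of_neg_deriv_eq_div (div_pos hpy (sub_pos.2 hf1)) hFy_diff hr_anti hRx_pos
    (by rw [hRx]; field_simp)

theorem phiRight_nonneg (hf1 : f < 1) (hRx_pos : 0 < Rx)
    (hRx : -deriv Fy Rx = (1 - f) * (px / py)) {x : ℝ} (hx : Rx ≤ x) :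
    0 ≤ phiRight Fy f px py Rx x := by
  simpa [phiRight] using
    monotoneOn_phiRight hpy hFy_diff hr_anti hf1 hRx_pos hRx self_mem_Ici hx hx

theorem antitoneOn_phiLeft (hLx_pos : 0 < Lx) (hLx : -deriv Fy Lx = (1 / (1 - f)) * (px / py)) :
    AntitoneOn (phiLeft Fy f px py Lx) (Ioc 0 Lx) :=
  antitoneOn_Ioc_of_neg_deriv_eq_div hpy hFy_diff hr_anti hLx_pos (by rw [hLx]; ring)

theorem phiLeft_nonneg (hLx_pos : 0 < Lx) (hLx : -deriv Fy Lx = (1 / (1 - f)) * (px / py))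
    {x : ℝ} (hx : x ∈ Ioc 0 Lx) : 0 ≤ phiLeft Fy f px py Lx x := by
  simpa [phiLeft] using
    antitoneOn_phiLeft hpy hFy_diff hr_anti hLx_pos hLx hx ⟨hLx_pos, le_rfl⟩ hx.2

variable (hLx_pos : 0 < Lx) (hLx : -deriv Fy Lx = (1 / (1 - f)) * (px / py))
include hLx_pos hLx

theorem phi_antitoneOn : AntitoneOn (phi Fy f px py Lx Rx) (Ioc 0 Rx) := by
  intro x hx y hy hxy
  rw [phi_eq_phiLeft_min hx.2, phi_eq_phiLeft_min hy.2]
  exact antitoneOn_phiLeft hpy hFy_diff hr_anti hLx_pos hLx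
    ⟨lt_min hx.1 hLx_pos, min_le_right _ _⟩ ⟨lt_min hy.1 hLx_pos, min_le_right _ _⟩
    (min_le_min_right _ hxy)

theorem phi_nonneg (hf1 : f < 1) (hRx_pos : 0 < Rx)
    (hRx : -deriv Fy Rx = (1 - f) * (px / py)) {x : ℝ} (hx : 0 < x) :
    0 ≤ phi Fy f px py Lx Rx x := by
  rcases le_or_gt x Rx with hxR | hxR
  · rw [phi_eq_phiLeft_min hxR]
    exact phiLeft_nonneg hpy hFy_diff hr_anti hLx_pos hLx ⟨lt_min hx hLx_pos, min_le_right _ _⟩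
  · rw [phi_eq_phiRight hxR]
    exact phiRight_nonneg hpy hFy_diff hr_anti hf1 hRx_pos hRx hxR.le

end Potential

theorem phi_step_user_general
    (Fy : ℝ → ℝ) (f px py Lx Rx x0 xbar q : ℝ)
    (hf1 : f < 1)
    (hpy : 0 < py)
    (hFy_diff : ∀ x ∈ Set.Ioi (0 : ℝ), DifferentiableAt ℝ Fy x)
    (hr_anti : StrictAntiOn (fun x => -deriv Fy x) (Set.Ioi 0))
    (hLx_pos : 0 < Lx) (hLx : -deriv Fy Lx = (1 / (1 - f)) * (px / py))
    (hRx_pos : 0 < Rx) (hRx : -deriv Fy Rx = (1 - f) * (px / py))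
    (hxbar_pos : 0 < xbar) (hxbar : xbar ≤ x0)
    (hq : 0 ≤ q) :
    phi Fy f px py Lx Rx (xbar + (1 - f) * q) - phi Fy f px py Lx Rx xbar ≤
      (max (x0 + (1 - f) * q) Rx - Rx) * px -
        ((Fy Rx - Fy (max (x0 + (1 - f) * q) Rx)) / (1 - f)) * py := by
  have hr := hr_anti.antitoneOn
  have hmono := monotoneOn_phiRight hpy hFy_diff hr hf1 hRx_pos hRx
  have hstep : xbar ≤ xbar + (1 - f) * q := le_add_of_nonneg_right (by nlinarith)
  set x' := max (x0 + (1 - f) * q) Rx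
  have hAP : (x' - Rx) * px - ((Fy Rx - Fy x') / (1 - f)) * py = phiRight Fy f px py Rx x' := by
    rw [phiRight]
    ring
  have hAP_nonneg : 0 ≤ phiRight Fy f px py Rx x' :=
    phiRight_nonneg hpy hFy_diff hr hf1 hRx_pos hRx (le_max_right _ _)
  have hx' : xbar + (1 - f) * q ≤ x' := le_max_of_le_left (by linarith)
  rw [hAP]
  rcases le_or_gt (xbar + (1 - f) * q) Rx with hR | hR
  · have hdecrease := phi_antitoneOn hpy hFy_diff hr hLx_pos hLx ⟨hxbar_pos, hstep.trans hR⟩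
      ⟨hxbar_pos.trans_le hstep, hR⟩ hstep
    linarith
  · rw [phi_eq_phiRight hR]
    have hbar_nonneg := phi_nonneg hpy hFy_diff hr hLx_pos hLx hf1 hRx_pos hRx hxbar_pos
    linarith [hmono hR.le (hR.le.trans hx') hx']

/-- **potential step inequality for user transactions.**
Assume `r(x0) = p_x/p_y`. If a transaction `Sell(X,q)` (`q ≥ 0`) is executed at a state
`(x̄, F_y(x̄))` with `x̄ ≤ x0`, producing the new reserve `x̂ = x̄ + (1−f)q`, then
`φ(x̂) − φ(x̄) ≤ AP(s0, Sell(X,q))`, where `s0 = (x0, F_y(x0))` and, with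
`x′ = max (x0+(1−f)q) R_x`, `AP(s0, Sell(X,q)) = (x′ − R_x)·p_x − ((F_y(R_x) − F_y(x′))/(1−f))·p_y`.

The CFMM is given by a differentiable, strictly decreasing reserve curve `Fy` on `(0,∞)`,
with marginal exchange rate `r x = −Fy′ x` positive and strictly decreasing there;
`p_x, p_y > 0`, `f ∈ [0,1)`, `L_x` satisfies `r L_x = (1/(1−f))·(p_x/p_y)` and `R_x`
satisfies `r R_x = (1−f)·(p_x/p_y)`. -/
theorem phi_step_user
    (Fy : ℝ → ℝ) (f px py Lx Rx x0 xbar q : ℝ)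
    (hf0 : 0 ≤ f) (hf1 : f < 1)
    (hpx : 0 < px) (hpy : 0 < py)
    (hFy_diff : ∀ x ∈ Set.Ioi (0 : ℝ), DifferentiableAt ℝ Fy x)
    (hFy_anti : StrictAntiOn Fy (Set.Ioi 0))
    (hr_pos : ∀ x ∈ Set.Ioi (0 : ℝ), 0 < -deriv Fy x)
    (hr_anti : StrictAntiOn (fun x => -deriv Fy x) (Set.Ioi 0))
    (hLx_pos : 0 < Lx) (hLx : -deriv Fy Lx = (1 / (1 - f)) * (px / py))
    (hRx_pos : 0 < Rx) (hRx : -deriv Fy Rx = (1 - f) * (px / py))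
    (hx0_pos : 0 < x0) (hx0 : -deriv Fy x0 = px / py)
    (hxbar_pos : 0 < xbar) (hxbar : xbar ≤ x0)
    (hq : 0 ≤ q) :
    phi Fy f px py Lx Rx (xbar + (1 - f) * q) - phi Fy f px py Lx Rx xbar ≤
      (max (x0 + (1 - f) * q) Rx - Rx) * px -
        ((Fy Rx - Fy (max (x0 + (1 - f) * q) Rx)) / (1 - f)) * py :=
  phi_step_user_general Fy f px py Lx Rx x0 xbar q hf1 hpy hFy_diff hr_anti hLx_pos hLx hRx_pos hRx
    hxbar_pos hxbar hq
end
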